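/- arXiv:2003.12360 — 2 statements merged into one kernel-verified Lean document; each statement's English description precedes it below -/
import Mathlib

section
/- (Engelking's nested partitions lemma) Let F_i^+, F_i^- for i ∈ {1,…,n} be the pairs of opposite faces of the cube Iⁿ = [0,1]ⁿ. If Iⁿ = L'₀ ⊇ L'₁ ⊇ ⋯ ⊇ L'ₙ is a decreasing sequence of closed sets such that each L'ᵢ is a partition of L'_{i−1} between L'_{i−1} ∩ F_i^+ and L'_{i−1} ∩ F_i^-, then L'ₙ ≠ ∅. -/
/-!
The nested partitions lemma is reduced to the Poincaré–Miranda theorem. A partition `Lᵢ₊₁` of the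
closed set `Lᵢ` is `Pᵢ ∩ Qᵢ` for closed `Pᵢ ∪ Qᵢ = Lᵢ` with `Lᵢ ∩ Fᵢ⁺ ⊆ Pᵢ`, `Lᵢ ∩ Fᵢ⁻ ⊆ Qᵢ`.
The functions `fᵢ = d(·, Qᵢ ∪ Fᵢ⁻) - d(·, Pᵢ ∪ Fᵢ⁺)` are `≥ 0` on `Fᵢ⁺` and `≤ 0` on `Fᵢ⁻`, so
they have a common zero `x` in the cube, and then `x ∈ Lᵢ` forces `x ∈ Pᵢ ∩ Qᵢ = Lᵢ₊₁`.

Poincaré–Miranda is proved combinatorially. On the Kuhn triangulation of the grid `{0, …, N}ⁿ`,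
label a point by the least `i` with `xᵢ = 0`, or `xᵢ < N` and `fᵢ(x) ≤ 0` (and by `n` if there
is none). This is a Sperner labelling, so some simplex carries all labels `0, …, n`; its vertices
are `1/N`-close, and letting `N → ∞` gives the zero by uniform continuity and compactness.
Sperner's lemma (the number of fully labelled simplices is odd) is the door-counting parity
argument: a simplex has an odd number of doors iff it is fully labelled, doors through interior
facets pair up, and the boundary doors are the fully labelled simplices of the face `xₙ = 0`.
-/

open Set Metric EMetric
open scoped ENNReal NNReal

noncomputable section

variable {α : Type*}

/-- Extended distance between two sets: `inf {d(x,y) : x ∈ s, y ∈ t}`. -/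
def setD [PseudoEMetricSpace α] (s t : Set α) : ℝ≥0∞ := ⨅ x ∈ s, ⨅ y ∈ t, edist x y

/-- A family of sets is `r`-disjoint if distinct members are at distance ≥ r. -/
def RDisjoint [PseudoEMetricSpace α] (r : ℝ) (𝒰 : Set (Set α)) : Prop :=
  ∀ U ∈ 𝒰, ∀ V ∈ 𝒰, U ≠ V → ENNReal.ofReal r ≤ setD U V

/-- A family is `R`-bounded if every member has diameter at most `R`. -/
def BoundedBy [PseudoEMetricSpace α] (R : ℝ) (𝒰 : Set (Set α)) : Prop :=
  ∀ U ∈ 𝒰, EMetric.diam U ≤ ENNReal.ofReal R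

/-- A family is uniformly bounded if it is `R`-bounded for some `R`. -/
def UnifBounded [PseudoEMetricSpace α] (𝒰 : Set (Set α)) : Prop := ∃ R : ℝ, BoundedBy R 𝒰

/-- `asdim X ≤ n`: for every `r > 0` there are `n+1` uniformly bounded `r`-disjoint
families whose union covers `X`. -/
def AsdimLE (X : Type*) [MetricSpace X] (n : ℕ) : Prop :=
  ∀ r : ℝ, 0 < r → ∃ 𝒰 : Fin (n + 1) → Set (Set X),
    (∀ k, RDisjoint r (𝒰 k) ∧ UnifBounded (𝒰 k)) ∧ (⋃ k, ⋃₀ 𝒰 k) = Set.univ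

/-- The collection `A(X)` of finite nonempty subsets `σ ⊆ ℕ` such that there are NO
uniformly bounded families `𝒰 i` (`i ∈ σ`), each `i`-disjoint, whose union covers `X`. -/
def AX (X : Type*) [MetricSpace X] : Set (Finset ℕ) :=
  {σ | σ.Nonempty ∧ ¬ ∃ 𝒰 : ℕ → Set (Set X),
    (∀ i ∈ σ, RDisjoint (i : ℝ) (𝒰 i) ∧ UnifBounded (𝒰 i)) ∧
    (⋃ i ∈ σ, ⋃₀ 𝒰 i) = Set.univ}

/-- `M^a = {τ ∈ FinN : τ ∪ {a} ∈ M, a ∉ τ}` (members of `FinN` are nonempty). -/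
def derivSet (M : Set (Finset ℕ)) (a : ℕ) : Set (Finset ℕ) :=
  {τ | τ.Nonempty ∧ a ∉ τ ∧ insert a τ ∈ M}

/-- `Ord M ≤ α`, defined inductively: `Ord ∅ ≤ α` for every `α`, and
`Ord M ≤ α` whenever for all `a ∈ ℕ` there is `β < α` with `Ord M^a ≤ β`. -/
inductive OrdLE : Set (Finset ℕ) → Ordinal.{0} → Prop
  | empty (α : Ordinal) : OrdLE ∅ α
  | step (M : Set (Finset ℕ)) (α : Ordinal) (β : ℕ → Ordinal)
      (hβ : ∀ a : ℕ, β a < α)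
      (h : ∀ a : ℕ, OrdLE (derivSet M a) (β a)) : OrdLE M α

/-- `Ord M`: the least ordinal `α` with `Ord M ≤ α` (when one exists). -/
def trOrd (M : Set (Finset ℕ)) : Ordinal := sInf {α | OrdLE M α}

/-- `U` is open in the subspace `S`. -/
def OpenIn [TopologicalSpace α] (S U : Set α) : Prop := ∃ V, IsOpen V ∧ U = V ∩ S

/-- `L` is a partition of `S` between `A` and `B`: `S = U ⊔ L ⊔ W` with `U, W`
open in `S`, `A ⊆ U`, `B ⊆ W`. -/
def PartitionBetween [TopologicalSpace α] (S A B L : Set α) : Prop :=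
  ∃ U W : Set α, OpenIn S U ∧ OpenIn S W ∧ A ⊆ U ∧ B ⊆ W ∧
    S = U ∪ L ∪ W ∧ Disjoint U L ∧ Disjoint U W ∧ Disjoint L W

/-- `L` is an `ε`-partition of `S` between `A` and `B`. -/
def EPartitionBetween [PseudoEMetricSpace α] (ε : ℝ) (S A B L : Set α) : Prop :=
  PartitionBetween S A B L ∧ ENNReal.ofReal ε < setD L A ∧ ENNReal.ofReal ε < setD L B

/-- The cube `[0,B]^n` in Euclidean space. -/
def cube (n : ℕ) (B : ℝ) : Set (EuclideanSpace ℝ (Fin n)) := {x | ∀ i, x i ∈ Set.Icc 0 B}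

/-- The face `x_i = 0` of the cube `[0,B]^n`. -/
def faceNeg (n : ℕ) (B : ℝ) (i : Fin n) : Set (EuclideanSpace ℝ (Fin n)) :=
  {x | x ∈ cube n B ∧ x i = 0}

/-- The face `x_i = B` of the cube `[0,B]^n`. -/
def facePos (n : ℕ) (B : ℝ) (i : Fin n) : Set (EuclideanSpace ℝ (Fin n)) :=
  {x | x ∈ cube n B ∧ x i = B}

/-- The number of coordinates of `x ∈ ℤ^d` not lying in `2^p ℤ`. -/
def badCount {d : ℕ} (x : Fin d → ℤ) (p : ℕ) : ℕ :=
  (Finset.univ.filter fun i => ¬ (2 : ℤ) ^ p ∣ x i).card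

/-- The set of `x ∈ ℤ^d` satisfying, for each `(p, q)` in the list,
`|{i : x i ∉ 2^p ℤ}| ≤ q`.  Used to encode the spaces `X((p₁,…),(q₁,…))`. -/
def XZ {d : ℕ} (cs : List (ℕ × ℕ)) : Set (Fin d → ℤ) :=
  {x | ∀ c ∈ cs, badCount x c.1 ≤ c.2}

end

namespace Kuhn

open scoped Finset

variable {m n : ℕ}

def IsFull (g : Fin m → ℕ) : Prop := Finset.range m ⊆ Finset.image g Finset.univ

instance (g : Fin m → ℕ) : Decidable (IsFull g) :=
  inferInstanceAs (Decidable (Finset.range m ⊆ Finset.image g Finset.univ))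

theorem isFull_iff_image_eq {g : Fin m → ℕ} :
    IsFull g ↔ Finset.image g Finset.univ = Finset.range m :=
  ⟨fun h => (Finset.eq_of_subset_of_card_le h
    (by simpa using Finset.card_image_le (s := Finset.univ) (f := g))).symm,
    fun h => h.ge⟩

theorem IsFull.injective {g : Fin m → ℕ} (h : IsFull g) : Function.Injective g := by
  rw [← Set.injOn_univ, ← Finset.coe_univ, ← Finset.card_image_iff, isFull_iff_image_eq.1 h]
  simp

theorem image_succAbove_eq_erase {g : Fin (n + 1) → ℕ} (hg : Function.Injective g)
    (k : Fin (n + 1)) :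
    Finset.image (g ∘ k.succAbove) Finset.univ = (Finset.image g Finset.univ).erase (g k) := by
  rw [Finset.image_comp, Fin.image_succAbove_univ, ← Finset.image_erase hg,
    Finset.compl_eq_univ_sdiff, Finset.sdiff_singleton_eq_erase]

theorem card_filter_isFull_succAbove_of_isFull {g : Fin (n + 1) → ℕ} (hg : IsFull g) :
    #{k : Fin (n + 1) | IsFull (g ∘ k.succAbove)} = 1 := by
  have hdoor : ∀ k, IsFull (g ∘ k.succAbove) ↔ g k = n := fun k => by
    rw [isFull_iff_image_eq, image_succAbove_eq_erase hg.injective, isFull_iff_image_eq.1 hg,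
      Finset.range_add_one]
    refine ⟨fun h => ?_, fun h => by rw [h, Finset.erase_insert Finset.notMem_range_self]⟩
    by_contra hne
    simpa using h.subset (Finset.mem_erase.2 ⟨Ne.symm hne, Finset.mem_insert_self n _⟩)
  obtain ⟨k₀, -, hk₀⟩ := Finset.mem_image.1 (hg (Finset.self_mem_range_succ n))
  refine Finset.card_eq_one.2 ⟨k₀, ?_⟩
  ext k
  simp only [Finset.mem_filter, Finset.mem_univ, true_and, Finset.mem_singleton, hdoor, ← hk₀]
  exact hg.injective.eq_iff

theorem isFull_succAbove_of_eq {g : Fin (n + 1) → ℕ}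
    (hcov : Finset.range n ⊆ Finset.image g Finset.univ) {a b : Fin (n + 1)} (hab : a ≠ b)
    (hg : g a = g b) : IsFull (g ∘ a.succAbove) := by
  intro v hv
  obtain ⟨c, -, rfl⟩ := Finset.mem_image.1 (hcov hv)
  obtain ⟨c', hc'⟩ : ∃ c', g (a.succAbove c') = g c := by
    rcases eq_or_ne c a with rfl | hca
    · obtain ⟨b', hb'⟩ := Fin.exists_succAbove_eq hab.symm
      exact ⟨b', by rw [hb', hg]⟩
    · obtain ⟨c', hc'⟩ := Fin.exists_succAbove_eq hca
      exact ⟨c', by rw [hc']⟩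
  exact Finset.mem_image.2 ⟨c', Finset.mem_univ _, hc'⟩

theorem even_card_filter_isFull_succAbove {g : Fin (n + 1) → ℕ} (hle : ∀ k, g k ≤ n)
    (hg : ¬IsFull g) : Even #{k : Fin (n + 1) | IsFull (g ∘ k.succAbove)} := by
  by_cases hdoor : ∃ k : Fin (n + 1), IsFull (g ∘ k.succAbove)
  swap
  · push Not at hdoor
    simp [hdoor]
  obtain ⟨k₁, hk₁⟩ := hdoor
  have hcov : Finset.range n ⊆ Finset.image g Finset.univ :=
    hk₁.trans (by rw [Finset.image_comp]; exact Finset.image_subset_image (Finset.subset_univ _))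
  have hlt : ∀ k, g k < n := fun k => (hle k).lt_of_ne fun hk => hg fun v hv => by
    rcases (Finset.mem_range_succ_iff.1 hv).lt_or_eq with hv | rfl
    · exact hcov (Finset.mem_range.2 hv)
    · exact Finset.mem_image.2 ⟨k, Finset.mem_univ _, hk⟩
  obtain ⟨a, -, b, -, hab, hgab⟩ := Finset.exists_ne_map_eq_of_card_lt_of_maps_to
    (s := Finset.univ) (t := Finset.range n) (by simp) fun k _ => Finset.mem_range.2 (hlt k)
  suffices ({k | IsFull (g ∘ k.succAbove)} : Finset (Fin (n + 1))) = {a, b} by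
    rw [this, Finset.card_pair hab]
    exact even_two
  ext k
  simp only [Finset.mem_filter, Finset.mem_univ, true_and, Finset.mem_insert, Finset.mem_singleton]
  refine ⟨fun hk => ?_, ?_⟩
  · by_contra! hne
    obtain ⟨a', rfl⟩ := Fin.exists_succAbove_eq hne.1.symm
    obtain ⟨b', rfl⟩ := Fin.exists_succAbove_eq hne.2.symm
    exact hab (congrArg _ (hk.injective hgab))
  · rintro (rfl | rfl)
    · exact isFull_succAbove_of_eq hcov hab hgab
    · exact isFull_succAbove_of_eq hcov hab.symm hgab.symm

theorem card_filter_isFull_succAbove_mod_two {g : Fin (n + 1) → ℕ} (hle : ∀ k, g k ≤ n) :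
    (#{k : Fin (n + 1) | IsFull (g ∘ k.succAbove)} : ZMod 2) = if IsFull g then 1 else 0 := by
  split_ifs with hg
  · rw [card_filter_isFull_succAbove_of_isFull hg, Nat.cast_one]
  · exact (ZMod.natCast_eq_zero_iff_even).2 (even_card_filter_isFull_succAbove hle hg)

abbrev Simplex (n : ℕ) := (Fin n → ℕ) × Equiv.Perm (Fin n)

namespace Simplex

-- The Kuhn simplex `(b, σ)` has vertices `b = v₀, v₁, …, vₙ` with `vₖ₊₁ = vₖ + e_{σ⁻¹ k}`;
-- those with `b ∈ {0, …, N - 1}ⁿ` triangulate `[0, N]ⁿ`.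
def vertex (p : Simplex n) (k : ℕ) : Fin n → ℕ :=
  fun i => p.1 i + if (p.2 i : ℕ) < k then 1 else 0

def labels (ℓ : (Fin n → ℕ) → ℕ) (p : Simplex n) : Fin (n + 1) → ℕ :=
  fun k => ℓ (p.vertex k)

theorem vertex_le {N : ℕ} {p : Simplex n} (hp : ∀ i, p.1 i < N) (k : ℕ) (i : Fin n) :
    p.vertex k i ≤ N := by
  have := hp i
  unfold vertex
  split <;> omega

theorem vertex_le_vertex_add_one (p : Simplex n) (k k' : ℕ) (i : Fin n) :
    p.vertex k i ≤ p.vertex k' i + 1 := by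
  unfold vertex
  split <;> split <;> omega

theorem vertex_swap_mul (p : Simplex n) {x y : Fin n} (hxy : (x : ℕ) + 1 = y) {k : ℕ}
    (hk : k ≠ y) : vertex (p.1, Equiv.swap x y * p.2) k = p.vertex k := by
  have key : ∀ j : Fin n, ((Equiv.swap x y j : Fin n) : ℕ) < k ↔ (j : ℕ) < k := fun j => by
    rw [Equiv.swap_apply_def]
    split_ifs with h₁ h₂ <;> subst_vars <;> omega
  funext i
  simp [vertex, key]

end Simplex

def simplices (n N : ℕ) : Finset (Simplex n) :=
  Fintype.piFinset (fun _ => Finset.range N) ×ˢ Finset.univ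

theorem mem_simplices {N : ℕ} {p : Simplex n} : p ∈ simplices n N ↔ ∀ i, p.1 i < N := by
  simp [simplices]

-- Simplices whose facet opposite the `k`-th vertex is a door: it carries all labels `0, …, n - 1`.
def doorsAt (N : ℕ) (ℓ : (Fin n → ℕ) → ℕ) (k : Fin (n + 1)) : Finset (Simplex n) :=
  {p ∈ simplices n N | IsFull (p.labels ℓ ∘ k.succAbove)}

def fullyLabeled (N : ℕ) (ℓ : (Fin n → ℕ) → ℕ) : Finset (Simplex n) :=
  {p ∈ simplices n N | IsFull (p.labels ℓ)}

theorem mem_doorsAt {N : ℕ} {ℓ : (Fin n → ℕ) → ℕ} {k : Fin (n + 1)} {p : Simplex n} :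
    p ∈ doorsAt N ℓ k ↔ (∀ i, p.1 i < N) ∧ IsFull (p.labels ℓ ∘ k.succAbove) := by
  rw [doorsAt, Finset.mem_filter, mem_simplices]

theorem mem_fullyLabeled {N : ℕ} {ℓ : (Fin n → ℕ) → ℕ} {p : Simplex n} :
    p ∈ fullyLabeled N ℓ ↔ (∀ i, p.1 i < N) ∧ IsFull (p.labels ℓ) := by
  rw [fullyLabeled, Finset.mem_filter, mem_simplices]

structure IsSpernerLabeling (N : ℕ) (ℓ : (Fin n → ℕ) → ℕ) : Prop where
  le : ∀ x, (∀ i, x i ≤ N) → ℓ x ≤ n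
  le_of_eq_zero : ∀ x, (∀ i, x i ≤ N) → ∀ i : Fin n, x i = 0 → ℓ x ≤ i
  ne_of_eq_top : ∀ x, (∀ i, x i ≤ N) → ∀ i : Fin n, x i = N → ℓ x ≠ i

section

variable {N : ℕ} {ℓ : (Fin n → ℕ) → ℕ}

theorem card_fullyLabeled_eq_sum_card_doorsAt (hℓ : IsSpernerLabeling N ℓ) :
    (#(fullyLabeled N ℓ) : ZMod 2) = ∑ k, (#(doorsAt N ℓ k) : ZMod 2) := by
  simp only [doorsAt, fullyLabeled, Finset.card_filter, Nat.cast_sum, Nat.cast_ite, Nat.cast_one,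
    Nat.cast_zero]
  rw [Finset.sum_comm]
  refine Finset.sum_congr rfl fun p hp => ?_
  have hle k : p.labels ℓ k ≤ n :=
    hℓ.le _ (Simplex.vertex_le (mem_simplices.1 hp) k)
  rw [← card_filter_isFull_succAbove_mod_two hle, Finset.card_filter, Nat.cast_sum]
  simp

theorem card_doorsAt_eq_zero {k : Fin (n + 1)} (hk₀ : (k : ℕ) ≠ 0) (hkn : (k : ℕ) ≠ n) :
    (#(doorsAt N ℓ k) : ZMod 2) = 0 := by
  have hk := k.isLt
  set x : Fin n := ⟨k - 1, by omega⟩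
  set y : Fin n := ⟨k, by omega⟩
  have hxy : (x : ℕ) + 1 = y := by simp [x, y]; omega
  -- Swapping steps `k - 1` and `k` reflects a simplex across its facet opposite `vₖ`.
  rw [Finset.card_eq_sum_ones, Nat.cast_sum]
  refine Finset.sum_involution (fun p _ => (p.1, Equiv.swap x y * p.2)) (fun _ _ => rfl)
    (fun p _ _ h => ?_) (fun p hp => ?_) (fun p _ => by simp [Equiv.swap_mul_self_mul])
  · have : Equiv.swap x y = 1 := mul_eq_right.1 (congrArg Prod.snd h)
    exact absurd (Equiv.swap_eq_one_iff.1 this) (Fin.ne_of_val_ne (by omega))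
  · have hlab : Simplex.labels ℓ (p.1, Equiv.swap x y * p.2) ∘ k.succAbove =
        p.labels ℓ ∘ k.succAbove := by
      funext j
      simp only [Function.comp_apply, Simplex.labels]
      rw [Simplex.vertex_swap_mul p hxy]
      exact fun h => Fin.succAbove_ne k j (Fin.ext h)
    rw [mem_doorsAt] at hp ⊢
    exact ⟨hp.1, hlab ▸ hp.2⟩

end

namespace Simplex

-- The neighbour across the facet opposite `v₀`, with vertices `v₁, …, vₙ, v₁ + (1, …, 1)`.
def up (p : Simplex (m + 1)) : Simplex (m + 1) :=
  (Function.update p.1 (p.2.symm 0) (p.1 (p.2.symm 0) + 1), (finRotate (m + 1))⁻¹ * p.2)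

def down (p : Simplex (m + 1)) : Simplex (m + 1) :=
  (Function.update p.1 (p.2.symm (Fin.last m)) (p.1 (p.2.symm (Fin.last m)) - 1),
    finRotate (m + 1) * p.2)

theorem up_snd_symm_last (p : Simplex (m + 1)) : p.up.2.symm (Fin.last m) = p.2.symm 0 := by
  simp [up, Equiv.Perm.mul_def, Equiv.Perm.inv_def]

theorem down_snd_symm_zero (p : Simplex (m + 1)) : p.down.2.symm 0 = p.2.symm (Fin.last m) := by
  have : (finRotate (m + 1)).symm 0 = Fin.last m := by rw [Equiv.symm_apply_eq, finRotate_last]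
  simp [down, Equiv.Perm.mul_def, this]

theorem down_up (p : Simplex (m + 1)) : p.up.down = p := by
  rw [down, up_snd_symm_last]
  ext : 1
  · simp [up]
  · simp [up]

theorem up_down {p : Simplex (m + 1)} (hp : p.1 (p.2.symm (Fin.last m)) ≠ 0) : p.down.up = p := by
  rw [up, down_snd_symm_zero]
  ext : 1
  · simp only [down, Function.update_self, Function.update_idem]
    rw [Nat.sub_add_cancel (Nat.pos_of_ne_zero hp), Function.update_eq_self]
  · simp [down]

theorem vertex_up (p : Simplex (m + 1)) {k : ℕ} (hk : k ≤ m) :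
    p.up.vertex k = p.vertex (k + 1) := by
  funext i
  rcases eq_or_ne (p.2 i) 0 with h | h
  · obtain rfl : i = p.2.symm 0 := by rw [← h, Equiv.symm_apply_apply]
    simp [vertex, up, Equiv.Perm.inv_def]
    omega
  · have hi : i ≠ p.2.symm 0 := fun hi => h (by rw [hi, Equiv.apply_symm_apply])
    have h' : (p.2 i : ℕ) ≠ 0 := fun h' => h (Fin.ext h')
    simp only [vertex, up, Function.update_of_ne hi, Equiv.Perm.mul_apply, Equiv.Perm.inv_def,
      coe_finRotate_symm_of_ne_zero h]
    congr 1
    exact if_congr (by omega) rfl rfl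

theorem labels_up_comp_castSucc (ℓ : (Fin (m + 1) → ℕ) → ℕ) (p : Simplex (m + 1)) :
    p.up.labels ℓ ∘ Fin.castSucc = p.labels ℓ ∘ Fin.succ := by
  funext k
  simp [labels, vertex_up p (Nat.lt_succ_iff.1 k.isLt)]

end Simplex

def permSnoc (σ : Equiv.Perm (Fin m)) : Equiv.Perm (Fin (m + 1)) where
  toFun := Fin.lastCases (Fin.last m) fun i => (σ i).castSucc
  invFun := Fin.lastCases (Fin.last m) fun i => (σ.symm i).castSucc
  left_inv i := by cases i using Fin.lastCases <;> simp
  right_inv i := by cases i using Fin.lastCases <;> simp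

@[simp]
theorem permSnoc_last (σ : Equiv.Perm (Fin m)) : permSnoc σ (Fin.last m) = Fin.last m := by
  simp [permSnoc]

@[simp]
theorem permSnoc_castSucc (σ : Equiv.Perm (Fin m)) (i : Fin m) :
    permSnoc σ i.castSucc = (σ i).castSucc := by
  simp [permSnoc]

def permInit (σ : Equiv.Perm (Fin (m + 1))) (hσ : σ (Fin.last m) = Fin.last m) :
    Equiv.Perm (Fin m) where
  toFun i := (σ i.castSucc).castPred fun h =>
    (Fin.castSucc_lt_last i).ne (σ.injective (h.trans hσ.symm))
  invFun i := (σ.symm i.castSucc).castPred fun h =>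
    (Fin.castSucc_lt_last i).ne (σ.symm.injective (h.trans (σ.symm_apply_eq.2 hσ.symm).symm))
  left_inv i := Fin.castSucc_injective _ (by simp)
  right_inv i := Fin.castSucc_injective _ (by simp)

theorem permSnoc_permInit (σ : Equiv.Perm (Fin (m + 1))) (hσ : σ (Fin.last m) = Fin.last m) :
    permSnoc (permInit σ hσ) = σ := by
  ext i : 1
  cases i using Fin.lastCases <;> simp [permInit, hσ]

theorem permInit_permSnoc (σ : Equiv.Perm (Fin m)) :
    permInit (permSnoc σ) (permSnoc_last σ) = σ := by
  ext i : 1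
  simp [permInit]

namespace Simplex

def snoc (p : Simplex m) : Simplex (m + 1) := (Fin.snoc p.1 0, permSnoc p.2)

theorem vertex_snoc (p : Simplex m) {k : ℕ} (hk : k ≤ m) :
    p.snoc.vertex k = Fin.snoc (p.vertex k) 0 := by
  funext i
  cases i using Fin.lastCases <;> simp [snoc, vertex, hk]

theorem labels_snoc_comp_castSucc (ℓ : (Fin (m + 1) → ℕ) → ℕ) (p : Simplex m) :
    p.snoc.labels ℓ ∘ Fin.castSucc = p.labels fun x => ℓ (Fin.snoc x 0) := by
  funext k
  simp [labels, vertex_snoc p (Nat.lt_succ_iff.1 k.isLt)]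

end Simplex

section

variable {N : ℕ} {ℓ : (Fin (m + 1) → ℕ) → ℕ}

theorem base_add_one_lt_of_mem_doorsAt_zero (hℓ : IsSpernerLabeling N ℓ) {p : Simplex (m + 1)}
    (hp : p ∈ doorsAt N ℓ 0) : p.1 (p.2.symm 0) + 1 < N := by
  rw [mem_doorsAt, Fin.succAbove_zero] at hp
  obtain ⟨hb, hfull⟩ := hp
  set i := p.2.symm 0
  by_contra! hN
  obtain ⟨k, -, hk⟩ := Finset.mem_image.1 (hfull (Finset.mem_range.2 i.isLt))
  have htop : p.vertex (k + 1) i = N := by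
    have := hb i
    have h0 : p.2 i = 0 := p.2.apply_symm_apply 0
    simp [Simplex.vertex, h0]
    omega
  exact hℓ.ne_of_eq_top _ (Simplex.vertex_le hb _) i htop hk

theorem card_doorsAt_zero (hℓ : IsSpernerLabeling N ℓ) :
    #(doorsAt N ℓ 0) =
      #{p ∈ doorsAt N ℓ (Fin.last (m + 1)) | p.1 (p.2.symm (Fin.last m)) ≠ 0} := by
  refine Finset.card_bij' (fun p _ => p.up) (fun p _ => p.down) (fun p hp => ?_) (fun p hp => ?_)
    (fun p _ => p.down_up) (fun p hp => Simplex.up_down (Finset.mem_filter.1 hp).2)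
  · have hlt := base_add_one_lt_of_mem_doorsAt_zero hℓ hp
    rw [mem_doorsAt, Fin.succAbove_zero] at hp
    rw [Finset.mem_filter, mem_doorsAt, Fin.succAbove_last, Simplex.up_snd_symm_last]
    refine ⟨⟨fun j => ?_, ?_⟩, ?_⟩
    · rcases eq_or_ne j (p.2.symm 0) with rfl | hj
      · simpa [Simplex.up] using hlt
      · simpa [Simplex.up, Function.update_of_ne hj] using hp.1 j
    · rw [Simplex.labels_up_comp_castSucc]
      exact hp.2
    · simp [Simplex.up]
  · rw [Finset.mem_filter, mem_doorsAt, Fin.succAbove_last] at hp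
    rw [mem_doorsAt, Fin.succAbove_zero]
    obtain ⟨⟨hb, hfull⟩, hne⟩ := hp
    refine ⟨fun j => ?_, ?_⟩
    · rcases eq_or_ne j (p.2.symm (Fin.last m)) with rfl | hj
      · simpa [Simplex.down] using (Nat.sub_le _ 1).trans_lt (hb _)
      · simpa [Simplex.down, Function.update_of_ne hj] using hb j
    · rwa [← Simplex.labels_up_comp_castSucc, Simplex.up_down hne]

theorem symm_last_eq_last_of_mem_doorsAt_last (hℓ : IsSpernerLabeling N ℓ) {p : Simplex (m + 1)}
    (hp : p ∈ doorsAt N ℓ (Fin.last (m + 1))) (h0 : p.1 (p.2.symm (Fin.last m)) = 0) :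
    p.2.symm (Fin.last m) = Fin.last m := by
  rw [mem_doorsAt, Fin.succAbove_last] at hp
  obtain ⟨hb, hfull⟩ := hp
  obtain ⟨k, -, hk⟩ := Finset.mem_image.1 (hfull (Finset.self_mem_range_succ m))
  have hbot : p.vertex k (p.2.symm (Fin.last m)) = 0 := by
    simp [Simplex.vertex, h0, Nat.lt_succ_iff.1 k.isLt]
  have hm : m ≤ (p.2.symm (Fin.last m) : ℕ) :=
    hk.symm.le.trans (hℓ.le_of_eq_zero _ (Simplex.vertex_le hb _) _ hbot)
  exact Fin.ext (le_antisymm (Nat.lt_succ_iff.1 (Fin.isLt _)) hm)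

theorem card_filter_doorsAt_last_eq_zero (hN : 0 < N) (hℓ : IsSpernerLabeling N ℓ) :
    #{p ∈ doorsAt N ℓ (Fin.last (m + 1)) | p.1 (p.2.symm (Fin.last m)) = 0} =
      #(fullyLabeled N fun x => ℓ (Fin.snoc x 0)) := by
  have hσ {p : Simplex (m + 1)} (hp : p ∈ {p ∈ doorsAt N ℓ (Fin.last (m + 1)) |
      p.1 (p.2.symm (Fin.last m)) = 0}) : p.2 (Fin.last m) = Fin.last m := by
    rw [Finset.mem_filter] at hp
    exact (p.2.symm_apply_eq.1 (symm_last_eq_last_of_mem_doorsAt_last hℓ hp.1 hp.2)).symm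
  have hsnoc {p : Simplex (m + 1)} (hp : p ∈ {p ∈ doorsAt N ℓ (Fin.last (m + 1)) |
      p.1 (p.2.symm (Fin.last m)) = 0}) :
      Simplex.snoc (Fin.init p.1, permInit p.2 (hσ hp)) = p := by
    have h0 := (Finset.mem_filter.1 hp).2
    rw [symm_last_eq_last_of_mem_doorsAt_last hℓ (Finset.mem_filter.1 hp).1 h0] at h0
    ext : 1
    · exact funext fun i => by cases i using Fin.lastCases <;> simp [Simplex.snoc, h0, Fin.init]
    · exact permSnoc_permInit _ (hσ hp)
  refine Finset.card_bij' (fun p hp => (Fin.init p.1, permInit p.2 (hσ hp))) (fun q _ => q.snoc)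
    (fun p hp => ?_) (fun q hq => ?_) (fun p hp => hsnoc hp) (fun q _ => ?_)
  · have hdoor := (Finset.mem_filter.1 hp).1
    rw [← hsnoc hp, mem_doorsAt, Fin.succAbove_last, Simplex.labels_snoc_comp_castSucc] at hdoor
    rw [mem_fullyLabeled]
    exact ⟨fun i => by simpa [Simplex.snoc] using hdoor.1 i.castSucc, hdoor.2⟩
  · rw [mem_fullyLabeled] at hq
    rw [Finset.mem_filter, mem_doorsAt, Fin.succAbove_last, Simplex.labels_snoc_comp_castSucc]
    refine ⟨⟨fun i => ?_, hq.2⟩, ?_⟩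
    · cases i using Fin.lastCases <;> simp [Simplex.snoc, hN, hq.1]
    · rw [Simplex.snoc, (permSnoc q.2).symm_apply_eq.2 (permSnoc_last q.2).symm]
      simp
  · simp [Simplex.snoc, permInit_permSnoc]

theorem IsSpernerLabeling.snoc (hℓ : IsSpernerLabeling N ℓ) :
    IsSpernerLabeling N fun x : Fin m → ℕ => ℓ (Fin.snoc x 0) := by
  have hgrid {x : Fin m → ℕ} (hx : ∀ i, x i ≤ N) : ∀ i, (Fin.snoc x 0 : Fin (m + 1) → ℕ) i ≤ N :=
    fun i => by cases i using Fin.lastCases <;> simp [hx]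
  refine ⟨fun x hx => ?_, fun x hx i hi => ?_, fun x hx i hi => ?_⟩
  · simpa using hℓ.le_of_eq_zero _ (hgrid hx) (Fin.last m) (by simp)
  · simpa using hℓ.le_of_eq_zero _ (hgrid hx) i.castSucc (by simpa using hi)
  · simpa using hℓ.ne_of_eq_top _ (hgrid hx) i.castSucc (by simpa using hi)

end

theorem odd_card_fullyLabeled {N : ℕ} (hN : 0 < N) :
    ∀ {n : ℕ} {ℓ : (Fin n → ℕ) → ℕ}, IsSpernerLabeling N ℓ → Odd #(fullyLabeled N ℓ)
  | 0, ℓ, hℓ => by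
    have hfull : fullyLabeled N ℓ = simplices 0 N := Finset.filter_true_of_mem fun p hp v hv => by
      obtain rfl : v = 0 := by simpa using hv
      exact Finset.mem_image.2 ⟨0, Finset.mem_univ _, Nat.le_zero.1 (hℓ.le _ fun i => i.elim0)⟩
    simp [hfull, simplices]
  | m + 1, ℓ, hℓ => by
    have hmid (j : Fin m) : (#(doorsAt N ℓ j.castSucc.succ) : ZMod 2) = 0 :=
      card_doorsAt_eq_zero (by simp) (by simp [Fin.val_succ]; omega)
    have hlast : #(doorsAt N ℓ (Fin.last (m + 1))) =
        #{p ∈ doorsAt N ℓ (Fin.last (m + 1)) | p.1 (p.2.symm (Fin.last m)) = 0} +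
          #{p ∈ doorsAt N ℓ (Fin.last (m + 1)) | p.1 (p.2.symm (Fin.last m)) ≠ 0} :=
      (Finset.card_filter_add_card_filter_not _).symm
    rw [← ZMod.natCast_eq_one_iff_odd, card_fullyLabeled_eq_sum_card_doorsAt hℓ,
      Fin.sum_univ_succ, Fin.sum_univ_castSucc, Finset.sum_eq_zero fun j _ => hmid j,
      Fin.succ_last, hlast, card_filter_doorsAt_last_eq_zero hN hℓ, ← card_doorsAt_zero hℓ,
      Nat.cast_add, ZMod.natCast_eq_one_iff_odd.2 (odd_card_fullyLabeled hN hℓ.snoc)]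
    linear_combination CharTwo.add_self_eq_zero (#(doorsAt N ℓ 0) : ZMod 2)

end Kuhn

theorem IsCompact.exists_eq_zero_of_forall_exists_norm_lt {X E : Type*} [TopologicalSpace X]
    [NormedAddCommGroup E] {K : Set X} (hK : IsCompact K) {F : X → E} (hF : ContinuousOn F K)
    (h : ∀ ε > 0, ∃ x ∈ K, ‖F x‖ < ε) : ∃ x ∈ K, F x = 0 := by
  obtain ⟨x₀, hx₀, -⟩ := h 1 one_pos
  obtain ⟨x, hx, hmin⟩ := hK.exists_isMinOn ⟨x₀, hx₀⟩ hF.norm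
  refine ⟨x, hx, norm_le_zero_iff.1 (not_lt.1 fun hpos => ?_)⟩
  obtain ⟨y, hy, hlt⟩ := h _ hpos
  exact (hmin hy).not_gt hlt

namespace PoincareMiranda

variable {n : ℕ} (f : Fin n → (Fin n → ℝ) → ℝ)

noncomputable def gridPoint (N : ℕ) (v : Fin n → ℕ) : Fin n → ℝ := fun i => v i / N

theorem gridPoint_mem_Icc {N : ℕ} {v : Fin n → ℕ} (hv : ∀ i, v i ≤ N) :
    gridPoint N v ∈ Set.Icc 0 1 :=
  ⟨fun _ => div_nonneg (Nat.cast_nonneg _) (Nat.cast_nonneg _),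
    fun i => div_le_one_of_le₀ (Nat.cast_le.2 (hv i)) (Nat.cast_nonneg _)⟩

theorem dist_gridPoint_le {N : ℕ} {v u : Fin n → ℕ} (h : ∀ i, v i ≤ u i + 1)
    (h' : ∀ i, u i ≤ v i + 1) : dist (gridPoint N v) (gridPoint N u) ≤ 1 / N := by
  refine (dist_pi_le_iff (by positivity)).2 fun i => ?_
  rw [gridPoint, gridPoint, Real.dist_eq, ← sub_div, abs_div, Nat.abs_cast]
  gcongr
  rw [abs_sub_le_iff]
  have h₁ : (v i : ℝ) ≤ u i + 1 := by exact_mod_cast h i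
  have h₂ : (u i : ℝ) ≤ v i + 1 := by exact_mod_cast h' i
  constructor <;> linarith

def AdmitsLabel (N : ℕ) (v : Fin n → ℕ) (i : Fin n) : Prop :=
  v i = 0 ∨ (v i ≠ N ∧ f i (gridPoint N v) ≤ 0)

-- The least `i` such that `v` admits label `i`; the condition holds vacuously at `n`.
open Classical in
noncomputable def label (N : ℕ) (v : Fin n → ℕ) : ℕ :=
  Nat.find (p := fun j => ∀ i : Fin n, (i : ℕ) = j → AdmitsLabel f N v i)
    ⟨n, fun i hi => absurd hi i.isLt.ne⟩

variable {f}

theorem admitsLabel_of_label_eq {N : ℕ} {v : Fin n → ℕ} {i : Fin n} (h : label f N v = i) :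
    AdmitsLabel f N v i := by
  classical
  exact Nat.find_spec (p := fun j => ∀ i : Fin n, (i : ℕ) = j → AdmitsLabel f N v i) _ i h.symm

theorem not_admitsLabel_of_label_eq {N : ℕ} {v : Fin n → ℕ} (h : label f N v = n) (i : Fin n) :
    ¬AdmitsLabel f N v i := by
  classical
  have hi : (i : ℕ) < label f N v := by rw [h]; exact i.isLt
  exact fun hcond => Nat.find_min (p := fun j => ∀ i : Fin n, (i : ℕ) = j → AdmitsLabel f N v i) _
    hi fun i' hi' => Fin.ext hi' ▸ hcond

theorem isSpernerLabeling_label {N : ℕ} (hN : 0 < N) : Kuhn.IsSpernerLabeling N (label f N) := by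
  classical
  refine ⟨fun v _ => Nat.find_min' _ fun i hi => absurd hi i.isLt.ne,
    fun v _ i hi => Nat.find_min' _ fun i' hi' => Or.inl (Fin.ext hi' ▸ hi), fun v _ i hi h => ?_⟩
  rcases admitsLabel_of_label_eq h with h0 | ⟨hN', -⟩
  · omega
  · exact hN' hi

theorem nonneg_of_label_eq
    (hpos : ∀ i, ∀ x ∈ Set.Icc (0 : Fin n → ℝ) 1, x i = 1 → 0 ≤ f i x)
    {N : ℕ} (hN : 0 < N) {v : Fin n → ℕ} (hv : ∀ i, v i ≤ N) (h : label f N v = n) (i : Fin n) :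
    0 ≤ f i (gridPoint N v) := by
  have hcond := not_admitsLabel_of_label_eq h i
  simp only [AdmitsLabel, not_or, not_and, not_le] at hcond
  by_cases hvi : v i = N
  · exact hpos i _ (gridPoint_mem_Icc hv) (by simp [gridPoint, hvi, hN.ne'])
  · exact (hcond.2 hvi).le

theorem nonpos_of_label_eq
    (hneg : ∀ i, ∀ x ∈ Set.Icc (0 : Fin n → ℝ) 1, x i = 0 → f i x ≤ 0)
    {N : ℕ} {v : Fin n → ℕ} (hv : ∀ i, v i ≤ N) {i : Fin n} (h : label f N v = i) :
    f i (gridPoint N v) ≤ 0 := by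
  rcases admitsLabel_of_label_eq h with h0 | ⟨-, hle⟩
  · exact hneg i _ (gridPoint_mem_Icc hv) (by simp [gridPoint, h0])
  · exact hle

theorem exists_grid_witnesses
    (hpos : ∀ i, ∀ x ∈ Set.Icc (0 : Fin n → ℝ) 1, x i = 1 → 0 ≤ f i x)
    (hneg : ∀ i, ∀ x ∈ Set.Icc (0 : Fin n → ℝ) 1, x i = 0 → f i x ≤ 0) {N : ℕ} (hN : 0 < N) :
    ∃ y ∈ Set.Icc 0 1, ∃ z : Fin n → Fin n → ℝ, ∀ i,
      z i ∈ Set.Icc 0 1 ∧ dist (z i) y ≤ 1 / N ∧ 0 ≤ f i y ∧ f i (z i) ≤ 0 := by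
  obtain ⟨p, hp⟩ :=
    Finset.card_pos.1 (Kuhn.odd_card_fullyLabeled hN (isSpernerLabeling_label (f := f) hN)).pos
  obtain ⟨hb, hfull⟩ := Kuhn.mem_fullyLabeled.1 hp
  have hv (k : ℕ) : ∀ i, p.vertex k i ≤ N := Kuhn.Simplex.vertex_le hb k
  have hlabel (j : ℕ) (hj : j ≤ n) : ∃ k : Fin (n + 1), label f N (p.vertex k) = j := by
    obtain ⟨k, -, hk⟩ := Finset.mem_image.1 (hfull (Finset.mem_range_succ_iff.2 hj))
    exact ⟨k, hk⟩
  obtain ⟨kn, hkn⟩ := hlabel n le_rfl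
  choose k hk using fun i : Fin n => hlabel i i.isLt.le
  refine ⟨gridPoint N (p.vertex kn), gridPoint_mem_Icc (hv kn),
    fun i => gridPoint N (p.vertex (k i)), fun i => ⟨gridPoint_mem_Icc (hv _),
      dist_gridPoint_le (p.vertex_le_vertex_add_one _ _) (p.vertex_le_vertex_add_one _ _),
      nonneg_of_label_eq hpos hN (hv _) hkn i, nonpos_of_label_eq hneg (hv _) (hk i)⟩⟩

theorem exists_norm_lt (hf : ∀ i, ContinuousOn (f i) (Set.Icc 0 1))
    (hpos : ∀ i, ∀ x ∈ Set.Icc (0 : Fin n → ℝ) 1, x i = 1 → 0 ≤ f i x)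
    (hneg : ∀ i, ∀ x ∈ Set.Icc (0 : Fin n → ℝ) 1, x i = 0 → f i x ≤ 0) {ε : ℝ} (hε : 0 < ε) :
    ∃ y ∈ Set.Icc 0 1, ‖fun i => f i y‖ < ε := by
  obtain ⟨δ, hδ, hF⟩ := Metric.uniformContinuousOn_iff.1
    (isCompact_Icc.uniformContinuousOn_of_continuous (continuousOn_pi.2 hf)) ε hε
  obtain ⟨N, hN⟩ := exists_nat_one_div_lt hδ
  obtain ⟨y, hy, z, hz⟩ := exists_grid_witnesses hpos hneg N.succ_pos
  refine ⟨y, hy, (pi_norm_lt_iff hε).2 fun i => ?_⟩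
  obtain ⟨hzi, hdist, hy0, hz0⟩ := hz i
  have hclose := (dist_le_pi_dist (fun j => f j y) (fun j => f j (z i)) i).trans_lt
    (hF y hy (z i) hzi (by rw [dist_comm]; exact hdist.trans_lt (by simpa using hN)))
  rw [Real.dist_eq] at hclose
  rw [Real.norm_eq_abs, abs_of_nonneg hy0]
  linarith [le_abs_self (f i y - f i (z i))]

theorem exists_mem_Icc_forall_eq_zero (hf : ∀ i, ContinuousOn (f i) (Set.Icc 0 1))
    (hpos : ∀ i, ∀ x ∈ Set.Icc (0 : Fin n → ℝ) 1, x i = 1 → 0 ≤ f i x)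
    (hneg : ∀ i, ∀ x ∈ Set.Icc (0 : Fin n → ℝ) 1, x i = 0 → f i x ≤ 0) :
    ∃ x ∈ Set.Icc 0 1, ∀ i, f i x = 0 := by
  obtain ⟨x, hx, hx0⟩ := isCompact_Icc.exists_eq_zero_of_forall_exists_norm_lt
    (continuousOn_pi.2 hf) fun ε hε => exists_norm_lt hf hpos hneg hε
  exact ⟨x, hx, congrFun hx0⟩

end PoincareMiranda

section Cube

variable {n : ℕ}

theorem toLp_mem_cube_iff {a : Fin n → ℝ} : WithLp.toLp 2 a ∈ cube n 1 ↔ a ∈ Set.Icc 0 1 := by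
  simp [cube, Pi.le_def, forall_and]

theorem isClosed_cube (B : ℝ) : IsClosed (cube n B) := by
  simp only [cube, Set.ofPred_forall]
  exact isClosed_iInter fun i => isClosed_Icc.preimage (PiLp.continuous_apply 2 _ i)

theorem isClosed_facePos (B : ℝ) (i : Fin n) : IsClosed (facePos n B i) :=
  (isClosed_cube B).inter (isClosed_eq (PiLp.continuous_apply 2 _ i) continuous_const)

theorem isClosed_faceNeg (B : ℝ) (i : Fin n) : IsClosed (faceNeg n B i) :=
  (isClosed_cube B).inter (isClosed_eq (PiLp.continuous_apply 2 _ i) continuous_const)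

theorem facePos_nonempty {B : ℝ} (hB : 0 ≤ B) (i : Fin n) : (facePos n B i).Nonempty :=
  ⟨WithLp.toLp 2 fun _ => B, fun _ => by simp [hB], by simp⟩

theorem faceNeg_nonempty {B : ℝ} (hB : 0 ≤ B) (i : Fin n) : (faceNeg n B i).Nonempty :=
  ⟨0, fun _ => by simp [hB], by simp⟩

end Cube

theorem PoincareMiranda.exists_mem_cube_forall_eq_zero {n : ℕ}
    {f : Fin n → EuclideanSpace ℝ (Fin n) → ℝ} (hf : ∀ i, ContinuousOn (f i) (cube n 1))
    (hpos : ∀ i, ∀ x ∈ facePos n 1 i, 0 ≤ f i x) (hneg : ∀ i, ∀ x ∈ faceNeg n 1 i, f i x ≤ 0) :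
    ∃ x ∈ cube n 1, ∀ i, f i x = 0 := by
  obtain ⟨a, ha, h⟩ := exists_mem_Icc_forall_eq_zero (f := fun i a => f i (WithLp.toLp 2 a))
    (fun i => (hf i).comp (PiLp.continuous_toLp 2 _).continuousOn
      fun _ ha => toLp_mem_cube_iff.2 ha)
    (fun i _ ha hai => hpos i _ ⟨toLp_mem_cube_iff.2 ha, hai⟩)
    (fun i _ ha hai => hneg i _ ⟨toLp_mem_cube_iff.2 ha, hai⟩)
  exact ⟨_, toLp_mem_cube_iff.2 ha, h⟩

theorem PartitionBetween.exists_isClosed_union_inter {X : Type*} [TopologicalSpace X]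
    {S A B L : Set X} (h : PartitionBetween S A B L) (hS : IsClosed S) :
    ∃ P Q : Set X, IsClosed P ∧ IsClosed Q ∧ P ∪ Q = S ∧ P ∩ Q = L ∧ A ⊆ P ∧ B ⊆ Q := by
  obtain ⟨_, _, ⟨U, hU, rfl⟩, ⟨W, hW, rfl⟩, hAU, hBW, hcover, hUL, hUW, hLW⟩ := h
  refine ⟨S ∩ Wᶜ, S ∩ Uᶜ, hS.inter hW.isClosed_compl, hS.inter hU.isClosed_compl, ?_, ?_, ?_, ?_⟩
  all_goals
    simp only [Set.ext_iff, Set.subset_def, Set.disjoint_left, Set.mem_union, Set.mem_inter_iff,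
      Set.mem_compl_iff] at *
  · intro x; have := hcover x; have := @hUW x; tauto
  · intro x; have := hcover x; have := @hUL x; have := @hLW x; tauto
  · intro x hx; have := hAU x hx; have := @hUW x; tauto
  · intro x hx; have := hBW x hx; have := @hUW x; tauto

theorem mem_of_infDist_union_eq {X : Type*} [MetricSpace X] {S P Q L A B : Set X} {x : X}
    (hP : IsClosed P) (hQ : IsClosed Q) (hA : IsClosed A) (hB : IsClosed B)
    (hA₀ : A.Nonempty) (hB₀ : B.Nonempty) (hPQ : P ∪ Q = S) (hL : P ∩ Q = L)
    (hAP : S ∩ A ⊆ P) (hBQ : S ∩ B ⊆ Q) (hx : x ∈ S)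
    (h : infDist x (Q ∪ B) = infDist x (P ∪ A)) : x ∈ L := by
  have hPA : x ∈ P ∪ A ↔ infDist x (P ∪ A) = 0 :=
    (hP.union hA).mem_iff_infDist_zero (hA₀.mono Set.subset_union_right)
  have hQB : x ∈ Q ∪ B ↔ infDist x (Q ∪ B) = 0 :=
    (hQ.union hB).mem_iff_infDist_zero (hB₀.mono Set.subset_union_right)
  have hboth : x ∈ P ∪ A ∧ x ∈ Q ∪ B := by
    rcases hPQ ▸ hx with hxP | hxQ
    · exact ⟨Or.inl hxP, hQB.2 (h.trans (hPA.1 (Or.inl hxP)))⟩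
    · exact ⟨hPA.2 (h.symm.trans (hQB.1 (Or.inl hxQ))), Or.inl hxQ⟩
  rw [← hL]
  exact ⟨hboth.1.elim id fun hxA => hAP ⟨hx, hxA⟩, hboth.2.elim id fun hxB => hBQ ⟨hx, hxB⟩⟩

theorem stmt9_general (n : ℕ) (L : ℕ → Set (EuclideanSpace ℝ (Fin n)))
    (h0 : L 0 = cube n 1)
    (hclosed : ∀ i, i ≤ n → IsClosed (L i))
    (hpart : ∀ i, (hi : i < n) →
      PartitionBetween (L i) (L i ∩ facePos n 1 ⟨i, hi⟩) (L i ∩ faceNeg n 1 ⟨i, hi⟩)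
        (L (i + 1))) :
    (L n).Nonempty := by
  choose P Q hP hQ hPQ hL hAP hBQ using fun i : Fin n =>
    (hpart i i.isLt).exists_isClosed_union_inter (hclosed i i.isLt.le)
  obtain ⟨x, hx, hzero⟩ := PoincareMiranda.exists_mem_cube_forall_eq_zero
    (f := fun i x => infDist x (Q i ∪ faceNeg n 1 i) - infDist x (P i ∪ facePos n 1 i))
    (fun i => ((continuous_infDist_pt _).sub (continuous_infDist_pt _)).continuousOn)
    (fun i x hx => by simp [infDist_zero_of_mem (Set.mem_union_right (P i) hx), infDist_nonneg])
    (fun i x hx => by simp [infDist_zero_of_mem (Set.mem_union_right (Q i) hx), infDist_nonneg])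
  have hmem : ∀ j ≤ n, x ∈ L j := by
    intro j
    induction j with
    | zero => exact fun _ => h0 ▸ hx
    | succ j ih =>
      intro hj
      exact mem_of_infDist_union_eq (hP ⟨j, hj⟩) (hQ _) (isClosed_facePos 1 _)
        (isClosed_faceNeg 1 _) (facePos_nonempty zero_le_one _) (faceNeg_nonempty zero_le_one _)
        (hPQ _) (hL _) (hAP _) (hBQ _) (ih (by omega)) (sub_eq_zero.1 (hzero _))
  exact ⟨x, hmem n le_rfl⟩

/-- Engelking's nested partitions lemma: if `Iⁿ = L₀ ⊇ L₁ ⊇ ⋯ ⊇ Lₙ` are closed sets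
such that each `Lᵢ₊₁` is a partition of `Lᵢ` between `Lᵢ ∩ Fᵢ⁺` and `Lᵢ ∩ Fᵢ⁻`,
then `Lₙ ≠ ∅`. -/
theorem stmt9 (n : ℕ) (L : ℕ → Set (EuclideanSpace ℝ (Fin n)))
    (h0 : L 0 = cube n 1)
    (hclosed : ∀ i, i ≤ n → IsClosed (L i))
    (hdec : ∀ i, i < n → L (i + 1) ⊆ L i)
    (hpart : ∀ i, (hi : i < n) →
      PartitionBetween (L i) (L i ∩ facePos n 1 ⟨i, hi⟩) (L i ∩ faceNeg n 1 ⟨i, hi⟩)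
        (L (i + 1))) :
    (L n).Nonempty :=
  stmt9_general n L h0 hclosed hpart
end

section
/- If L is a c-partition of a metric space X between A and B, and M ⊇ L is a set with M ⊆ N_s(L) (the s-neighborhood of L) where s < c, then there exists a decomposition witnessing that M contains the 'separating core': precisely, X ∖ M = U' ⊔ W' where U', W' are open, A ⊆ U', B ⊆ W' (assuming d(A,L) > c > s and d(B,L) > c > s), and M is a (c − s)-partition of X between A and B. -/
open Set Metric EMetric
open scoped ENNReal NNReal

/-! Every point of `M ⊆ N_s(L)` lies within `s` of `L`, so by the triangle inequality `M` stays
more than `c - s` away from `A` and `B`, and in particular misses them. Removing the closed set `M`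
from the open sides of `X = U ⊔ L ⊔ W` then gives `X = (U ∖ M) ⊔ M ⊔ (W ∖ M)`. -/

section SetD

variable {α : Type*} [PseudoEMetricSpace α] {s t : Set α}

theorem setD_le_edist {x y : α} (hx : x ∈ s) (hy : y ∈ t) : setD s t ≤ edist x y :=
  (iInf₂_le x hx).trans (iInf₂_le y hy)

theorem le_setD {r : ℝ≥0∞} (h : ∀ x ∈ s, ∀ y ∈ t, r ≤ edist x y) : r ≤ setD s t :=
  le_iInf₂ fun x hx => le_iInf₂ fun y hy => h x hx y hy

theorem disjoint_of_pos_setD (h : 0 < setD s t) : Disjoint s t :=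
  Set.disjoint_left.2 fun x hs ht => by simpa using h.trans_le (setD_le_edist hs ht)

theorem setD_sub_le_setD_of_subset_thickening {δ : ℝ} {L M : Set α}
    (hM : M ⊆ Metric.thickening δ L) : setD L t - ENNReal.ofReal δ ≤ setD M t := by
  refine le_setD fun m hm y hy => tsub_le_iff_left.2 ?_
  obtain ⟨l, hl, hml⟩ := (Metric.mem_thickening_iff_exists_edist_lt L m).1 (hM hm)
  calc setD L t ≤ edist l y := setD_le_edist hl hy
    _ ≤ edist l m + edist m y := edist_triangle _ _ _
    _ ≤ ENNReal.ofReal δ + edist m y := by rw [edist_comm]; gcongr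

theorem ofReal_sub_lt_setD_of_subset_thickening {c δ : ℝ} {L M : Set α} (hδ : 0 ≤ δ)
    (hδc : δ ≤ c) (hM : M ⊆ Metric.thickening δ L) (hL : ENNReal.ofReal c < setD L t) :
    ENNReal.ofReal (c - δ) < setD M t := by
  refine lt_of_lt_of_le ?_ (setD_sub_le_setD_of_subset_thickening hM)
  rwa [lt_tsub_iff_right, ← ENNReal.ofReal_add (sub_nonneg.2 hδc) hδ, sub_add_cancel]

end SetD

theorem OpenIn.diff {α : Type*} [TopologicalSpace α] {S U M : Set α} (hU : OpenIn S U)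
    (hM : IsClosed M) : OpenIn S (U \ M) := by
  obtain ⟨V, hV, rfl⟩ := hU
  exact ⟨V \ M, hV.sdiff hM, Set.inter_sdiff_right_comm⟩

theorem PartitionBetween.of_superset {α : Type*} [TopologicalSpace α] {S A B L M : Set α}
    (hP : PartitionBetween S A B L) (hLM : L ⊆ M) (hMS : M ⊆ S) (hM : IsClosed M)
    (hAM : Disjoint A M) (hBM : Disjoint B M) : PartitionBetween S A B M := by
  obtain ⟨U, W, hU, hW, hAU, hBW, hS, -, hUW, -⟩ := hP
  refine ⟨U \ M, W \ M, hU.diff hM, hW.diff hM, Set.subset_sdiff.2 ⟨hAU, hAM⟩,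
    Set.subset_sdiff.2 ⟨hBW, hBM⟩, ?_, Set.disjoint_sdiff_left,
    hUW.mono Set.sdiff_subset Set.sdiff_subset, Set.disjoint_sdiff_right⟩
  rw [Set.sdiff_union_self, Set.union_assoc, Set.union_sdiff_self, ← Set.union_assoc]
  subst hS
  exact Set.Subset.antisymm (by gcongr) (Set.union_subset
    (Set.union_subset (Set.subset_union_left.trans Set.subset_union_left) hMS)
    Set.subset_union_right)

theorem stmt17_general {X : Type*} [MetricSpace X] (c s : ℝ) (hs : 0 < s) (hsc : s < c)
    (A B L M : Set X)
    (hL : EPartitionBetween c Set.univ A B L)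
    (hLM : L ⊆ M) (hMs : M ⊆ Metric.thickening s L) (hMc : IsClosed M) :
    EPartitionBetween (c - s) Set.univ A B M := by
  obtain ⟨hP, hA, hB⟩ := hL
  have hMA := ofReal_sub_lt_setD_of_subset_thickening hs.le hsc.le hMs hA
  have hMB := ofReal_sub_lt_setD_of_subset_thickening hs.le hsc.le hMs hB
  refine ⟨hP.of_superset hLM (Set.subset_univ M) hMc ?_ ?_, hMA, hMB⟩
  · exact (disjoint_of_pos_setD (pos_of_gt hMA)).symm
  · exact (disjoint_of_pos_setD (pos_of_gt hMB)).symm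

/-- Enlarging a `c`-partition `L` of `X` between `A` and `B` to a closed set `M` with
`L ⊆ M ⊆ N_s(L)` (`s < c`) yields a `(c − s)`-partition of `X` between `A` and `B`. -/
theorem stmt17 {X : Type*} [MetricSpace X] (c s : ℝ) (hs : 0 < s) (hsc : s < c)
    (A B L M : Set X) (hAB : Disjoint A B)
    (hL : EPartitionBetween c Set.univ A B L)
    (hLM : L ⊆ M) (hMs : M ⊆ Metric.thickening s L) (hMc : IsClosed M) :
    EPartitionBetween (c - s) Set.univ A B M :=
  stmt17_general c s hs hsc A B L M hL hLM hMs hMc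
end
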